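/- arXiv:2105.00759 — 7 statements merged into one kernel-verified Lean document; each statement's English description precedes it below -/
import Mathlib

section
/- For the NOR rule on a cyclic binary configuration, if at some time step t every maximal block of consecutive 0's in the configuration E_t has length at least 3, then applying the NOR rule twice returns the same configuration, i.e., E_{t+2} = E_t. -/
/-- The NOR rule. -/
def norRule (a b c : Bool) : Bool := !(a || b || c)

/-!
Two NOR steps at a cell depend only on the five cells around it, and there the claim is a
finite check. A 1 turns its three-cell neighbourhood into 0's, so it comes back as 1. A 0 in a
block of length at least 3 has a neighbour whose whole neighbourhood is 0; that neighbour
becomes 1 and forces the cell back to 0.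
-/

theorem norRule_norRule_norRule_eq {a b c d e : Bool}
    (h101 : ¬(b = true ∧ c = false ∧ d = true))
    (h1001_left : ¬(a = true ∧ b = false ∧ c = false ∧ d = true))
    (h1001_right : ¬(b = true ∧ c = false ∧ d = false ∧ e = true)) :
    norRule (norRule a b c) (norRule b c d) (norRule c d e) = c := by
  revert a b c d e
  decide

section NorStep

variable {R : Type*} [CommRing R]

def norStep (σ : R → Bool) : R → Bool := fun i => norRule (σ (i - 1)) (σ i) (σ (i + 1))

theorem norStep_norStep_eq_self (σ : R → Bool)
    (h101 : ∀ i, ¬(σ i = true ∧ σ (i + 1) = false ∧ σ (i + 2) = true))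
    (h1001 : ∀ i, ¬(σ i = true ∧ σ (i + 1) = false ∧ σ (i + 2) = false ∧ σ (i + 3) = true)) :
    norStep (norStep σ) = σ := by
  funext i
  have hm := h101 (i - 1)
  have hl := h1001 (i - 2)
  have hr := h1001 (i - 1)
  simp only [show i - 2 + 1 = i - 1 by ring, show i - 2 + 2 = i by ring,
    show i - 2 + 3 = i + 1 by ring, show i - 1 + 1 = i by ring, show i - 1 + 2 = i + 1 by ring,
    show i - 1 + 3 = i + 2 by ring] at hm hl hr
  simp only [norStep, show i - 1 - 1 = i - 2 by ring, show i - 1 + 1 = i by ring,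
    show i + 1 - 1 = i by ring, show i + 1 + 1 = i + 2 by ring]
  exact norRule_norRule_norRule_eq hm hl hr

end NorStep

theorem nor_stable_of_no_short_zero_blocks_general (n : ℕ)
    (E : ℕ → ZMod n → Bool)
    (hE : ∀ t (i : ZMod n),
      E (t + 1) i = norRule (E t (i - 1)) (E t i) (E t (i + 1)))
    (t : ℕ)
    (h101 : ∀ i : ZMod n,
      ¬(E t i = true ∧ E t (i + 1) = false ∧ E t (i + 2) = true))
    (h1001 : ∀ i : ZMod n,
      ¬(E t i = true ∧ E t (i + 1) = false ∧ E t (i + 2) = false ∧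
        E t (i + 3) = true)) :
    E (t + 2) = E t := by
  have hstep : ∀ s, E (s + 1) = norStep (E s) := fun s => funext (hE s)
  rw [hstep (t + 1), hstep t]
  exact norStep_norStep_eq_self (E t) h101 h1001

theorem nor_stable_of_no_short_zero_blocks (n : ℕ) (hn : 3 ≤ n)
    (E : ℕ → ZMod n → Bool)
    (hE : ∀ t (i : ZMod n),
      E (t + 1) i = norRule (E t (i - 1)) (E t i) (E t (i + 1)))
    (t : ℕ)
    (h101 : ∀ i : ZMod n,
      ¬(E t i = true ∧ E t (i + 1) = false ∧ E t (i + 2) = true))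
    (h1001 : ∀ i : ZMod n,
      ¬(E t i = true ∧ E t (i + 1) = false ∧ E t (i + 2) = false ∧
        E t (i + 3) = true)) :
    E (t + 2) = E t :=
  nor_stable_of_no_short_zero_blocks_general n E hE t h101 h1001
end

section
/- For the NOR rule on a cyclic binary configuration, for every time t > 0, the configuration E_t contains neither the pattern 101 nor the pattern 1001; that is, there is no location i with E_t(i)=1, E_t(i+1)=0, E_t(i+2)=1, nor location i with E_t(i)=1, E_t(i+1)=0, E_t(i+2)=0, E_t(i+3)=1. -/
theorem norRule_eq_true_iff {a b c : Bool} :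
    norRule a b c = true ↔ a = false ∧ b = false ∧ c = false := by
  cases a <;> cases b <;> cases c <;> decide

section NorEvolution

variable {R : Type*} [CommRing R] {E : ℕ → R → Bool}

theorem eq_false_of_succ_eq_true
    (hE : ∀ t i, E (t + 1) i = norRule (E t (i - 1)) (E t i) (E t (i + 1)))
    {t : ℕ} {i : R} (h : E (t + 1) i = true) :
    E t (i - 1) = false ∧ E t i = false ∧ E t (i + 1) = false :=
  norRule_eq_true_iff.mp (hE t i ▸ h)

theorem succ_add_one_eq_true_of_add_two_eq_false
    (hE : ∀ t i, E (t + 1) i = norRule (E t (i - 1)) (E t i) (E t (i + 1)))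
    {t : ℕ} {i : R} (h : E (t + 1) i = true) (h₂ : E t (i + 2) = false) :
    E (t + 1) (i + 1) = true := by
  obtain ⟨-, h₀, h₁⟩ := eq_false_of_succ_eq_true hE h
  rw [hE, norRule_eq_true_iff, add_sub_cancel_right, add_assoc, one_add_one_eq_two]
  exact ⟨h₀, h₁, h₂⟩

end NorEvolution

theorem nor_no_bad_patterns_general (n : ℕ)
    (E : ℕ → ZMod n → Bool)
    (hE : ∀ t (i : ZMod n),
      E (t + 1) i = norRule (E t (i - 1)) (E t i) (E t (i + 1)))
    (t : ℕ) (ht : 0 < t) :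
    (∀ i : ZMod n,
      ¬(E t i = true ∧ E t (i + 1) = false ∧ E t (i + 2) = true)) ∧
    (∀ i : ZMod n,
      ¬(E t i = true ∧ E t (i + 1) = false ∧ E t (i + 2) = false ∧
        E t (i + 3) = true)) := by
  obtain ⟨s, rfl⟩ := Nat.exists_eq_add_of_lt ht
  rw [zero_add]
  constructor
  · rintro i ⟨h₀, h₁, h₂⟩
    have h₂' : E s (i + 2) = false := (eq_false_of_succ_eq_true hE h₂).2.1
    simp [succ_add_one_eq_true_of_add_two_eq_false hE h₀ h₂'] at h₁
  · rintro i ⟨h₀, h₁, -, h₃⟩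
    have h₂' : E s (i + 2) = false := by
      simpa [show i + 3 - 1 = i + 2 by ring] using (eq_false_of_succ_eq_true hE h₃).1
    simp [succ_add_one_eq_true_of_add_two_eq_false hE h₀ h₂'] at h₁

theorem nor_no_bad_patterns (n : ℕ) (hn : 5 ≤ n)
    (E : ℕ → ZMod n → Bool)
    (hE : ∀ t (i : ZMod n),
      E (t + 1) i = norRule (E t (i - 1)) (E t i) (E t (i + 1)))
    (t : ℕ) (ht : 0 < t) :
    (∀ i : ZMod n,
      ¬(E t i = true ∧ E t (i + 1) = false ∧ E t (i + 2) = true)) ∧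
    (∀ i : ZMod n,
      ¬(E t i = true ∧ E t (i + 1) = false ∧ E t (i + 2) = false ∧
        E t (i + 3) = true)) :=
  nor_no_bad_patterns_general n E hE t ht
end

section
/- For the majority rule, finality is preserved: if the 1-neighborhood pattern (E_t(i-1), E_t(i), E_t(i+1)) is not equal to 101 or 010 (viewed as a triple of bits), then the pattern (E_{t+1}(i-1), E_{t+1}(i), E_{t+1}(i+1)) is also not equal to 101 or 010. -/
/-!
A triple of bits is final exactly when its centre agrees with one of its neighbours. Two equal
adjacent bits are both fixed by the majority rule, since each of them sees its own value twice,
so the agreeing pair survives one step and the new triple at `i` is final again.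
-/

/-- The majority rule on bits. -/
def maj (a b c : Fin 2) : Fin 2 := if 2 ≤ a.val + b.val + c.val then 1 else 0

/-- A location `i` is final at configuration `σ` if its neighborhood pattern
is not 101 nor 010. -/
def MajFinal {n : ℕ} (σ : ZMod n → Fin 2) (i : ZMod n) : Prop :=
  ¬((σ (i - 1), σ i, σ (i + 1)) = ((1 : Fin 2), (0 : Fin 2), (1 : Fin 2)) ∨
    (σ (i - 1), σ i, σ (i + 1)) = ((0 : Fin 2), (1 : Fin 2), (0 : Fin 2)))

theorem maj_self_left (a c : Fin 2) : maj a a c = a := by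
  revert a c
  decide

theorem maj_self_right (a c : Fin 2) : maj a c c = c := by
  revert a c
  decide

theorem majFinal_iff {n : ℕ} (σ : ZMod n → Fin 2) (i : ZMod n) :
    MajFinal σ i ↔ σ (i - 1) = σ i ∨ σ i = σ (i + 1) := by
  unfold MajFinal
  generalize σ (i - 1) = a, σ i = b, σ (i + 1) = c
  revert a b c
  decide

theorem maj_step_adjacent_eq {n : ℕ} {σ τ : ZMod n → Fin 2}
    (hτ : ∀ i, τ i = maj (σ (i - 1)) (σ i) (σ (i + 1))) {j : ZMod n} (h : σ j = σ (j + 1)) :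
    τ j = τ (j + 1) := by
  rw [hτ j, hτ (j + 1), add_sub_cancel_right, ← h, maj_self_right, maj_self_left]

theorem maj_finality_preserved_general (n : ℕ)
    (E : ℕ → ZMod n → Fin 2)
    (hE : ∀ t (i : ZMod n),
      E (t + 1) i = maj (E t (i - 1)) (E t i) (E t (i + 1)))
    (t : ℕ) (i : ZMod n) (h : MajFinal (E t) i) :
    MajFinal (E (t + 1)) i := by
  rw [majFinal_iff] at h ⊢
  rcases h with h_left | h_right
  · have h_pair : E t (i - 1) = E t (i - 1 + 1) := by rwa [sub_add_cancel]
    left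
    simpa only [sub_add_cancel] using maj_step_adjacent_eq (hE t) h_pair
  · exact Or.inr (maj_step_adjacent_eq (hE t) h_right)

theorem maj_finality_preserved (n : ℕ) (hn : 5 ≤ n)
    (E : ℕ → ZMod n → Fin 2)
    (hE : ∀ t (i : ZMod n),
      E (t + 1) i = maj (E t (i - 1)) (E t i) (E t (i + 1)))
    (t : ℕ) (i : ZMod n) (h : MajFinal (E t) i) :
    MajFinal (E (t + 1)) i :=
  maj_finality_preserved_general n E hE t i h
end

section
/- For the majority rule, a non-final location becomes final in one step if and only if one of its neighbors is final: if (E_t(i-1), E_t(i), E_t(i+1)) ∈ {101, 010}, then (E_{t+1}(i-1), E_{t+1}(i), E_{t+1}(i+1)) ∉ {101, 010} if and only if (E_t(i-2), E_t(i-1), E_t(i)) ∉ {101, 010} or (E_t(i), E_t(i+1), E_t(i+2)) ∉ {101, 010}. -/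
theorem fin_two_eq_of_ne_of_ne {a b c : Fin 2} (hab : a ≠ b) (hbc : b ≠ c) : a = c := by
  revert a b c; decide

theorem maj_eq_left_of_ne {a b c : Fin 2} (h : b ≠ c) : maj a b c = a := by
  revert a b c; decide

theorem maj_eq_right_of_ne {a b c : Fin 2} (h : a ≠ b) : maj a b c = c := by
  revert a b c; decide

theorem maj_nonfinal_becomes_final_iff_general (n : ℕ)
    (E : ℕ → ZMod n → Fin 2)
    (hE : ∀ t (i : ZMod n),
      E (t + 1) i = maj (E t (i - 1)) (E t i) (E t (i + 1)))
    (t : ℕ) (i : ZMod n) (h : ¬ MajFinal (E t) i) :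
    MajFinal (E (t + 1)) i ↔
      (MajFinal (E t) (i - 1) ∨ MajFinal (E t) (i + 1)) := by
  rw [majFinal_iff, not_or] at h
  obtain ⟨hl, hr⟩ := h
  have new_center : E (t + 1) i = E t (i - 1) := by
    rw [hE, maj_eq_right_of_ne hl, fin_two_eq_of_ne_of_ne hl hr]
  have new_left : E (t + 1) (i - 1) = E t (i - 1 - 1) := by
    rw [hE, sub_add_cancel, maj_eq_left_of_ne hl]
  have new_right : E (t + 1) (i + 1) = E t (i + 1 + 1) := by
    rw [hE, add_sub_cancel_right, maj_eq_right_of_ne hr]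
  simp only [majFinal_iff, new_center, new_left, new_right, sub_add_cancel,
    add_sub_cancel_right, hl, hr, or_false, false_or]
  rw [fin_two_eq_of_ne_of_ne hl hr]

theorem maj_nonfinal_becomes_final_iff (n : ℕ) (hn : 7 ≤ n)
    (E : ℕ → ZMod n → Fin 2)
    (hE : ∀ t (i : ZMod n),
      E (t + 1) i = maj (E t (i - 1)) (E t i) (E t (i + 1)))
    (t : ℕ) (i : ZMod n) (h : ¬ MajFinal (E t) i) :
    MajFinal (E (t + 1)) i ↔
      (MajFinal (E t) (i - 1) ∨ MajFinal (E t) (i + 1)) :=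
  maj_nonfinal_becomes_final_iff_general n E hE t i h
end

section
/- For the majority rule, if all locations are non-final at time t (every 1-neighborhood is 101 or 010), then the configuration is alternating and E_{t+1}(i) = 1 - E_t(i) for every i; moreover all locations remain non-final at time t+1. -/
/-- A location `i` is non-final at configuration `σ` if its neighborhood
pattern is 101 or 010. -/
def MajNonFinal {n : ℕ} (σ : ZMod n → Fin 2) (i : ZMod n) : Prop :=
  (σ (i - 1), σ i, σ (i + 1)) = ((1 : Fin 2), (0 : Fin 2), (1 : Fin 2)) ∨
  (σ (i - 1), σ i, σ (i + 1)) = ((0 : Fin 2), (1 : Fin 2), (0 : Fin 2))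

theorem maj_of_ne_of_ne {a b c : Fin 2} (ha : a ≠ b) (hc : c ≠ b) : maj a b c = 1 - b := by
  revert a b c
  decide

section NonFinal

variable {n : ℕ} {σ : ZMod n → Fin 2} {i : ZMod n}

theorem majNonFinal_iff : MajNonFinal σ i ↔ σ (i - 1) ≠ σ i ∧ σ (i + 1) ≠ σ i := by
  unfold MajNonFinal
  generalize σ (i - 1) = a, σ i = b, σ (i + 1) = c
  revert a b c
  decide

theorem MajNonFinal.one_sub (h : MajNonFinal σ i) : MajNonFinal (fun j => 1 - σ j) i := by
  rw [majNonFinal_iff] at h ⊢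
  exact ⟨sub_right_injective.ne h.1, sub_right_injective.ne h.2⟩

end NonFinal

theorem maj_all_nonfinal_alternates_general (n : ℕ)
    (E : ℕ → ZMod n → Fin 2)
    (hE : ∀ t (i : ZMod n),
      E (t + 1) i = maj (E t (i - 1)) (E t i) (E t (i + 1)))
    (t : ℕ) (h : ∀ i : ZMod n, MajNonFinal (E t) i) :
    (∀ i : ZMod n, E t (i + 1) ≠ E t i) ∧
    (∀ i : ZMod n, E (t + 1) i = 1 - E t i) ∧
    (∀ i : ZMod n, MajNonFinal (E (t + 1)) i) := by
  have hne (i : ZMod n) := majNonFinal_iff.1 (h i)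
  have hflip : E (t + 1) = fun i => 1 - E t i :=
    funext fun i => (hE t i).trans (maj_of_ne_of_ne (hne i).1 (hne i).2)
  exact ⟨fun i => (hne i).2, congrFun hflip, fun i => hflip ▸ (h i).one_sub⟩

theorem maj_all_nonfinal_alternates (n : ℕ) (hn : 3 ≤ n)
    (E : ℕ → ZMod n → Fin 2)
    (hE : ∀ t (i : ZMod n),
      E (t + 1) i = maj (E t (i - 1)) (E t i) (E t (i + 1)))
    (t : ℕ) (h : ∀ i : ZMod n, MajNonFinal (E t) i) :
    (∀ i : ZMod n, E t (i + 1) ≠ E t i) ∧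
    (∀ i : ZMod n, E (t + 1) i = 1 - E t i) ∧
    (∀ i : ZMod n, MajNonFinal (E (t + 1)) i) :=
  maj_all_nonfinal_alternates_general n E hE t h
end

section
/- For the 'flip if homogeneous' rule fih, where fih(a,b,c) = b unless a=b=c in which case it equals ¬b: if the triple at location i at time t is neither 000 nor 111, then the triple at location i at time t+1 is neither 000 nor 111. -/
/-- The 'flip if homogeneous' rule. -/
def fih (a b c : Bool) : Bool := if a = b ∧ b = c then !b else b

theorem fih_of_not_homogeneous {a b c : Bool} (h : ¬(a = b ∧ b = c)) : fih a b c = b :=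
  if_neg h

theorem fih_of_ne_left {a b c : Bool} (h : a ≠ b) : fih a b c = b :=
  fih_of_not_homogeneous fun hh => h hh.1

theorem fih_of_ne_right {a b c : Bool} (h : b ≠ c) : fih a b c = b :=
  fih_of_not_homogeneous fun hh => h hh.2

theorem triple_eq_fff_or_ttt_iff {a b c : Bool} :
    ((a, b, c) = (false, false, false) ∨ (a, b, c) = (true, true, true)) ↔ a = b ∧ b = c := by
  cases a <;> cases b <;> cases c <;> decide

/-- A non-homogeneous window `(b, c, d)` keeps its centre, and the side at which it is
inhomogeneous keeps its value too. -/
theorem fih_window_not_homogeneous {a b c d e : Bool} (h : ¬(b = c ∧ c = d)) :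
    ¬(fih a b c = fih b c d ∧ fih b c d = fih c d e) := by
  rw [fih_of_not_homogeneous h]
  rcases not_and_or.mp h with hbc | hcd
  · rw [fih_of_ne_right hbc]
    exact fun hh => hbc hh.1
  · rw [fih_of_ne_left hcd]
    exact fun hh => hcd hh.2

theorem fih_finality_preserved_general (n : ℕ)
    (E : ℕ → ZMod n → Bool)
    (hE : ∀ t (i : ZMod n),
      E (t + 1) i = fih (E t (i - 1)) (E t i) (E t (i + 1)))
    (t : ℕ) (i : ZMod n)
    (h : ¬((E t (i - 1), E t i, E t (i + 1)) = (false, false, false) ∨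
          (E t (i - 1), E t i, E t (i + 1)) = (true, true, true))) :
    ¬((E (t + 1) (i - 1), E (t + 1) i, E (t + 1) (i + 1)) =
        (false, false, false) ∨
      (E (t + 1) (i - 1), E (t + 1) i, E (t + 1) (i + 1)) =
        (true, true, true)) := by
  rw [triple_eq_fff_or_ttt_iff] at h ⊢
  rw [hE, hE, hE, sub_add_cancel, add_sub_cancel_right]
  exact fih_window_not_homogeneous h

theorem fih_finality_preserved (n : ℕ) (hn : 5 ≤ n)
    (E : ℕ → ZMod n → Bool)
    (hE : ∀ t (i : ZMod n),
      E (t + 1) i = fih (E t (i - 1)) (E t i) (E t (i + 1)))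
    (t : ℕ) (i : ZMod n)
    (h : ¬((E t (i - 1), E t i, E t (i + 1)) = (false, false, false) ∨
          (E t (i - 1), E t i, E t (i + 1)) = (true, true, true))) :
    ¬((E (t + 1) (i - 1), E (t + 1) i, E (t + 1) (i + 1)) =
        (false, false, false) ∨
      (E (t + 1) (i - 1), E (t + 1) i, E (t + 1) (i + 1)) =
        (true, true, true)) :=
  fih_finality_preserved_general n E hE t i h
end

section
/- For the 'flip if homogeneous' rule, a non-final location becomes final in one step if and only if it has a final neighbor: if (E_t(i-1), E_t(i), E_t(i+1)) ∈ {000, 111}, then (E_{t+1}(i-1), E_{t+1}(i), E_{t+1}(i+1)) ∉ {000, 111} if and only if (E_t(i-2), E_t(i-1), E_t(i)) ∉ {000, 111} or (E_t(i), E_t(i+1), E_t(i+2)) ∉ {000, 111}. -/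
/-- A location `i` is final at configuration `σ` (for `fih`) if its
neighborhood pattern is not 000 nor 111. -/
def FihFinal {n : ℕ} (σ : ZMod n → Bool) (i : ZMod n) : Prop :=
  ¬((σ (i - 1), σ i, σ (i + 1)) = (false, false, false) ∨
    (σ (i - 1), σ i, σ (i + 1)) = (true, true, true))

/-! A location that is not final sits in a homogeneous block `bbb`, so it flips to `¬b`.
Each neighbour flips as well exactly when it is itself not final, so the new
neighbourhood of the location is inhomogeneous iff some neighbour kept the value `b`,
i.e. iff some neighbour was final. -/

section

variable {n : ℕ} {σ : ZMod n → Bool} {i : ZMod n}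

def fihStep (σ : ZMod n → Bool) : ZMod n → Bool :=
  fun i => fih (σ (i - 1)) (σ i) (σ (i + 1))

theorem fihFinal_iff_ne_or_ne : FihFinal σ i ↔ σ (i - 1) ≠ σ i ∨ σ (i + 1) ≠ σ i := by
  unfold FihFinal
  cases σ (i - 1) <;> cases σ i <;> cases σ (i + 1) <;> simp

theorem fih_eq_self_iff {a b c : Bool} : fih a b c = b ↔ ¬(a = b ∧ b = c) := by
  unfold fih
  split_ifs with h <;> simp [h]

theorem fihStep_eq_self_iff : fihStep σ i = σ i ↔ FihFinal σ i := by
  rw [fihStep, fih_eq_self_iff, fihFinal_iff_ne_or_ne, not_and_or, ne_comm (a := σ (i + 1))]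

theorem fihStep_eq_not_of_not_fihFinal (h : ¬FihFinal σ i) : fihStep σ i = !σ i :=
  Bool.eq_not.mpr (mt fihStep_eq_self_iff.mp h)

theorem fihFinal_fihStep_iff (h : ¬FihFinal σ i) :
    FihFinal (fihStep σ) i ↔ FihFinal σ (i - 1) ∨ FihFinal σ (i + 1) := by
  obtain ⟨hl, hr⟩ : σ (i - 1) = σ i ∧ σ (i + 1) = σ i := by
    simpa [fihFinal_iff_ne_or_ne] using h
  rw [fihFinal_iff_ne_or_ne, fihStep_eq_not_of_not_fihFinal h, Bool.ne_not, Bool.ne_not,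
    ← fihStep_eq_self_iff, ← fihStep_eq_self_iff, hl, hr]

end

theorem fih_nonfinal_becomes_final_iff_general (n : ℕ)
    (E : ℕ → ZMod n → Bool)
    (hE : ∀ t (i : ZMod n),
      E (t + 1) i = fih (E t (i - 1)) (E t i) (E t (i + 1)))
    (t : ℕ) (i : ZMod n) (h : ¬ FihFinal (E t) i) :
    FihFinal (E (t + 1)) i ↔
      (FihFinal (E t) (i - 1) ∨ FihFinal (E t) (i + 1)) := by
  have hstep : E (t + 1) = fihStep (E t) := funext (hE t)
  rw [hstep]
  exact fihFinal_fihStep_iff h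

theorem fih_nonfinal_becomes_final_iff (n : ℕ) (hn : 7 ≤ n)
    (E : ℕ → ZMod n → Bool)
    (hE : ∀ t (i : ZMod n),
      E (t + 1) i = fih (E t (i - 1)) (E t i) (E t (i + 1)))
    (t : ℕ) (i : ZMod n) (h : ¬ FihFinal (E t) i) :
    FihFinal (E (t + 1)) i ↔
      (FihFinal (E t) (i - 1) ∨ FihFinal (E t) (i + 1)) :=
  fih_nonfinal_becomes_final_iff_general n E hE t i h
end
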